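/- Let A be a p×q fully interlacing matrix of formal power series and r a positive integer. Then the p×(rq) matrix S^{(r)}A = (S_0^{(r)}A | S_1^{(r)}A | ... | S_{r-1}^{(r)}A), obtained by horizontally concatenating the entrywise Veronese r-sections, is fully interlacing. Moreover, Lace(S^{(r)}A) equals the submatrix of Lace(A) consisting of all rows whose index is congruent to one of 0, 1, ..., p-1 modulo rp. -/

import Mathlib

/-!
Write a row index of `Lace(S^{(r)}A)` as `p·a + i` and a column index as `rq·b + j` with
`j = q·k + l` (`k < r`, `l < q`). The entry is then the coefficient of `x^(b-a)` in
`S_k^{(r)} A_{il}`, i.e. the coefficient of `x^(k + r(b-a))` in `A_{il}`, which is the entry of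
`Lace(A)` in row `rp·a + i` and column `q(rb + k) + l = v`. So `Lace(S^{(r)}A)` is the
submatrix of `Lace(A)` on an increasing family of rows, and total positivity is inherited.
-/

open scoped BigOperators

/-- The coefficient of `x^n` in a power series, for an integer `n`
(zero when `n < 0`). -/
noncomputable def intCoeff (A : PowerSeries ℝ) (n : ℤ) : ℝ :=
  if 0 ≤ n then PowerSeries.coeff n.toNat A else 0

/-- A `ℤ × ℤ` matrix is totally positive (TP) if every finite square
submatrix (rows and columns chosen in increasing order) has nonnegative
determinant. -/
def TP (M : ℤ → ℤ → ℝ) : Prop :=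
  ∀ (n : ℕ) (r c : Fin n → ℤ), StrictMono r → StrictMono c →
    0 ≤ (Matrix.of fun a b => M (r a) (c b)).det

/-- The interlacing matrix `Lace(A)` of a `p × q` matrix of formal power
series: the `(u,v)`-entry, for `u = p·u' + i` (`0 ≤ i < p`) and
`v = q·v' + j` (`0 ≤ j < q`), is the coefficient of `x^(v'-u')` in `A i j`. -/
noncomputable def lace {p q : ℕ} [NeZero p] [NeZero q]
    (A : Fin p → Fin q → PowerSeries ℝ) : ℤ → ℤ → ℝ := fun u v =>
  intCoeff
    (A ⟨(u % (p : ℤ)).toNat, by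
          have hp : (0 : ℤ) < (p : ℤ) := by
            exact_mod_cast Nat.pos_of_ne_zero (NeZero.ne p)
          have h1 := Int.emod_nonneg u hp.ne'
          have h2 := Int.emod_lt_of_pos u hp
          omega⟩
       ⟨(v % (q : ℤ)).toNat, by
          have hq : (0 : ℤ) < (q : ℤ) := by
            exact_mod_cast Nat.pos_of_ne_zero (NeZero.ne q)
          have h1 := Int.emod_nonneg v hq.ne'
          have h2 := Int.emod_lt_of_pos v hq
          omega⟩)
    (v / (q : ℤ) - u / (p : ℤ))

/-- A matrix of formal power series is fully interlacing when its
interlacing matrix is totally positive. -/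
def FullyInterlacing {p q : ℕ} [NeZero p] [NeZero q]
    (A : Fin p → Fin q → PowerSeries ℝ) : Prop :=
  TP (lace A)

/-- A sequence of power series viewed as a `p × 1` column matrix. -/
noncomputable def colMat {p : ℕ} (A : Fin p → PowerSeries ℝ) :
    Fin p → Fin 1 → PowerSeries ℝ := fun i _ => A i

/-- `A(x)` interlaces `B(x)`: the `2 × 1` column `(A, B)ᵀ` is fully
interlacing. -/
def SeriesInterlaces (A B : PowerSeries ℝ) : Prop :=
  FullyInterlacing (colMat ![A, B])

/-- A power series is AESW (a Pólya frequency sequence) when its Toeplitz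
matrix `(a_{v-u})` is totally positive. -/
def IsAESW (A : PowerSeries ℝ) : Prop :=
  TP fun u v => intCoeff A (v - u)

/-- The `k`-th Veronese `r`-section `S_k^{(r)} A(x) = ∑_{n ≥ 0} a_{k+rn} xⁿ`. -/
noncomputable def veronese (r k : ℕ) (A : PowerSeries ℝ) : PowerSeries ℝ :=
  PowerSeries.mk fun n => PowerSeries.coeff (k + r * n) A
/-- The horizontal concatenation
`S^{(r)} A = (S₀^{(r)}A | S₁^{(r)}A | ⋯ | S_{r-1}^{(r)}A)` of the
entrywise Veronese `r`-sections of a `p × q` matrix of power series. -/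
noncomputable def sectMat {p q : ℕ} [NeZero q] (r : ℕ)
    (A : Fin p → Fin q → PowerSeries ℝ) : Fin p → Fin (r * q) → PowerSeries ℝ :=
  fun i j => veronese r ((j : ℕ) / q)
    (A i ⟨(j : ℕ) % q, Nat.mod_lt _ (Nat.pos_of_ne_zero (NeZero.ne q))⟩)

theorem TP.comp {M : ℤ → ℤ → ℝ} (hM : TP M) {f g : ℤ → ℤ} (hf : StrictMono f)
    (hg : StrictMono g) : TP fun u v => M (f u) (g v) :=
  fun n rows cols hrows hcols => hM n (f ∘ rows) (g ∘ cols) (hf.comp hrows) (hg.comp hcols)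

theorem strictMono_mul_mul_ediv_add_emod {p r : ℤ} (hp : 0 < p) (hr : 0 < r) :
    StrictMono fun u : ℤ => p * (r * (u / p)) + u % p := by
  have hsplit : ∀ u : ℤ, p * (r * (u / p)) + u % p = p * (r - 1) * (u / p) + u := fun u => by
    linear_combination Int.mul_ediv_add_emod u p
  simp only [hsplit]
  have hmono : Monotone fun u : ℤ => p * (r - 1) * (u / p) := fun u v huv =>
    mul_le_mul_of_nonneg_left (Int.ediv_le_ediv hp huv) (mul_nonneg hp.le (by omega))
  exact hmono.add_strictMono strictMono_id

theorem natCast_mul_add_fin_ediv {n : ℕ} (a : ℤ) (i : Fin n) : ((n : ℤ) * a + i) / n = a := by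
  have hn : (n : ℤ) ≠ 0 := by have := i.pos; omega
  rw [add_comm, Int.add_mul_ediv_left _ _ hn, Int.ediv_eq_zero_of_lt (by omega) (by omega),
    zero_add]

theorem natCast_mul_add_fin_emod {n : ℕ} (a : ℤ) (i : Fin n) : ((n : ℤ) * a + i) % n = i := by
  rw [add_comm, Int.add_mul_emod_self_left, Int.emod_eq_of_lt (by omega) (by omega)]

theorem exists_eq_natCast_mul_add_fin {n : ℕ} [NeZero n] (u : ℤ) :
    ∃ (a : ℤ) (i : Fin n), u = n * a + i := by
  have hn : (0 : ℤ) < n := by have := NeZero.pos n; omega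
  refine ⟨u / n, ⟨(u % n).toNat, by have := Int.emod_lt_of_pos u hn; omega⟩, ?_⟩
  rw [Int.toNat_of_nonneg (Int.emod_nonneg u hn.ne'), Int.mul_ediv_add_emod]

theorem lace_natCast_mul_add {p q : ℕ} [NeZero p] [NeZero q]
    (A : Fin p → Fin q → PowerSeries ℝ) (a b : ℤ) (i : Fin p) (j : Fin q) :
    lace A (p * a + i) (q * b + j) = intCoeff (A i j) (b - a) := by
  simp only [lace, natCast_mul_add_fin_ediv, natCast_mul_add_fin_emod, Int.toNat_natCast]

theorem intCoeff_veronese {r k : ℕ} (hk : k < r) (A : PowerSeries ℝ) (m : ℤ) :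
    intCoeff (veronese r k A) m = intCoeff A (k + r * m) := by
  rcases lt_or_ge m 0 with hm | hm
  · have hneg : (k : ℤ) + r * m < 0 := by nlinarith
    simp only [intCoeff, not_le.mpr hm, not_le.mpr hneg, if_false]
  · lift m to ℕ using hm
    rw [show (k : ℤ) + r * m = ((k + r * m : ℕ) : ℤ) by push_cast; ring]
    simp only [intCoeff, veronese, Nat.cast_nonneg, if_true, Int.toNat_natCast,
      PowerSeries.coeff_mk]

theorem lace_sectMat_natCast_mul_add {p q : ℕ} [NeZero p] [NeZero q] (r : ℕ) [NeZero r]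
    (A : Fin p → Fin q → PowerSeries ℝ) (a : ℤ) (i : Fin p) (v : ℤ) :
    lace (sectMat r A) (p * a + i) v = lace A (p * (r * a) + i) v := by
  obtain ⟨b, j, rfl⟩ := exists_eq_natCast_mul_add_fin (n := r * q) v
  have hq : 0 < q := NeZero.pos q
  set l : Fin q := ⟨j % q, Nat.mod_lt _ hq⟩
  have hk : (j : ℕ) / q < r := Nat.div_lt_of_lt_mul (lt_of_lt_of_eq j.isLt (mul_comm r q))
  have hcol : ((r * q : ℕ) : ℤ) * b + j = q * (r * b + (j / q : ℕ)) + l := by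
    have hj : ((j : ℕ) : ℤ) = q * ((j / q : ℕ) : ℤ) + (l : ℕ) := by
      exact_mod_cast (Nat.div_add_mod j q).symm
    rw [hj]; push_cast; ring
  rw [lace_natCast_mul_add, hcol, lace_natCast_mul_add, sectMat, intCoeff_veronese hk]
  congr 1
  ring

theorem lace_sectMat {p q : ℕ} [NeZero p] [NeZero q] (r : ℕ) [NeZero r]
    (A : Fin p → Fin q → PowerSeries ℝ) (u v : ℤ) :
    lace (sectMat r A) u v = lace A (p * (r * (u / p)) + u % p) v := by
  obtain ⟨a, i, rfl⟩ := exists_eq_natCast_mul_add_fin (n := p) u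
  rw [natCast_mul_add_fin_ediv, natCast_mul_add_fin_emod, lace_sectMat_natCast_mul_add]

/-- If `A` is fully interlacing then so is `S^{(r)} A`; moreover
`Lace(S^{(r)}A)` is the submatrix of `Lace(A)` consisting of all rows whose
index is congruent to one of `0, 1, …, p-1` modulo `rp` (the row of index
`u = p·u' + i` of `Lace(S^{(r)}A)` is the row of index `rp·u' + i` of
`Lace(A)`). -/
theorem stmt13 {p q : ℕ} [NeZero p] [NeZero q] (r : ℕ) [NeZero r]
    (A : Fin p → Fin q → PowerSeries ℝ) (hA : FullyInterlacing A) :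
    FullyInterlacing (sectMat r A) ∧
      ∀ u v : ℤ, lace (sectMat r A) u v =
        lace A ((p : ℤ) * ((r : ℤ) * (u / (p : ℤ))) + u % (p : ℤ)) v := by
  refine ⟨?_, lace_sectMat r A⟩
  have hrows := strictMono_mul_mul_ediv_add_emod (p := p) (r := r)
    (by exact_mod_cast NeZero.pos p) (by exact_mod_cast NeZero.pos r)
  rw [FullyInterlacing, funext₂ (lace_sectMat r A)]
  exact hA.comp hrows strictMono_id
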